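/- Let ρ ≠ 0 be real, a₁, a₂ ∈ (0,π), q continuous on [0,π], and c ∈ ℝ. Define y(x) = sin(ρx)/ρ + c·∫₀^x q(t)·sin(ρ(x−t))/ρ dt. If c satisfies y(a₁) + y(a₂) = c, i.e. c·(1 − ∫₀^{a₁} q(t)·sin(ρ(a₁−t))/ρ dt − ∫₀^{a₂} q(t)·sin(ρ(a₂−t))/ρ dt) = sin(ρa₁)/ρ + sin(ρa₂)/ρ, then y solves −y'' + q(x)(y(a₁)+y(a₂)) = ρ²·y with y(0)=0, y'(0)=1. -/

import Mathlib

set_option maxHeartbeats 1000000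
open Real MeasureTheory intervalIntegral Set Filter Topology

lemma left_deriv_aux (ρ : ℝ) (hρ : ρ ≠ 0) (q : ℝ → ℝ) :
    HasDerivWithinAt (fun x => ∫ t in (0:ℝ)..x, q t * Real.sin (ρ * (x - t)) / ρ) 0
      (Set.Iic 0) 0 := by
  set F : ℝ → ℝ := fun x => ∫ t in (0:ℝ)..x, q t * Real.sin (ρ * (x - t)) / ρ with hF
  have hF0 : F 0 = 0 := by simp [hF]
  rw [hasDerivWithinAt_iff_tendsto_slope]
  have hIic : Set.Iic (0:ℝ) \ {0} = Set.Iio 0 := by ext z; simp [lt_iff_le_and_ne]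
  rw [hIic]
  have hρ' : 0 < |ρ| := abs_pos.mpr hρ
  have hδ : 0 < π / (2 * |ρ|) := by positivity
  by_cases hP : ∃ x₀ ∈ Set.Ioo (-(π / (2 * |ρ|))) 0,
      IntervalIntegrable (fun t => q t * Real.sin (ρ * (x₀ - t)) / ρ) volume x₀ 0
  · obtain ⟨x₀, hx₀, hInt⟩ := hP
    obtain ⟨hx₀l, hx₀r⟩ := hx₀
    -- sin (ρ*(x₀ - t)) ≠ 0 for t ∈ [x₀/2, 0]
    have hsin : ∀ t ∈ Set.Icc (x₀ / 2) 0, Real.sin (ρ * (x₀ - t)) ≠ 0 := by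
      intro t ht h0
      obtain ⟨n, hn⟩ := Real.sin_eq_zero_iff.mp h0
      have h1 : x₀ - t ≤ x₀ / 2 := by linarith [ht.1]
      have h2 : x₀ ≤ x₀ - t := by linarith [ht.2]
      have habs : |x₀ - t| < π / (2 * |ρ|) := by
        rw [abs_of_nonpos (by linarith)]
        linarith
      have habs2 : x₀ - t ≠ 0 := by intro h; rw [h] at h1; linarith
      have hlt : |ρ * (x₀ - t)| < π := by
        rw [abs_mul]
        calc |ρ| * |x₀ - t| < |ρ| * (π / (2 * |ρ|)) := by
              exact (mul_lt_mul_iff_right₀ hρ').mpr habs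
          _ = π / 2 := by field_simp
          _ < π := by linarith [Real.pi_pos]
      have hne : ρ * (x₀ - t) ≠ 0 := mul_ne_zero hρ habs2
      have : |(n : ℝ) * π| < π := by rw [hn]; exact hlt
      rw [abs_mul, abs_of_nonneg Real.pi_pos.le] at this
      have : |(n : ℝ)| < 1 := by
        by_contra h
        push_neg at h
        nlinarith [Real.pi_pos]
      have hn0 : n = 0 := by
        have hni : |n| < 1 := by exact_mod_cast this
        have := abs_lt.mp hni
        omega
      rw [hn0, Int.cast_zero, zero_mul] at hn
      exact hne hn.symm
    -- q is interval integrable on [x₀/2, 0]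
    have hx₀2 : x₀ / 2 ≤ 0 := by linarith
    have hx₀x : x₀ ≤ x₀ / 2 := by linarith
    have Hq : IntervalIntegrable q volume (x₀ / 2) 0 := by
      have h1 : IntervalIntegrable (fun t => q t * Real.sin (ρ * (x₀ - t)) / ρ) volume (x₀/2) 0 :=
        hInt.mono_set (by rw [Set.uIcc_of_le hx₀2, Set.uIcc_of_le (by linarith : x₀ ≤ (0:ℝ))]
                          exact Set.Icc_subset_Icc hx₀x le_rfl)
      have h2 : IntervalIntegrable
          (fun t => (q t * Real.sin (ρ * (x₀ - t)) / ρ) * (ρ / Real.sin (ρ * (x₀ - t))))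
          volume (x₀/2) 0 := by
        apply h1.mul_continuousOn
        rw [Set.uIcc_of_le hx₀2]
        exact ContinuousOn.div continuousOn_const
          (Continuous.continuousOn (by fun_prop)) (fun t ht => hsin t ht)
      rw [intervalIntegrable_iff, Set.uIoc_of_le hx₀2] at h2 ⊢
      apply h2.congr_fun _ measurableSet_Ioc
      intro t ht
      have hs := hsin t (Set.Ioc_subset_Icc_self ht)
      field_simp
    have HqA : IntegrableOn (fun t => |q t|) (Set.Ioc (x₀/2) 0) volume := by
      have := Hq.abs
      rwa [intervalIntegrable_iff, Set.uIoc_of_le hx₀2] at this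
    -- primitive K
    set K : ℝ → ℝ := fun x => ∫ t in (x₀/2)..x, |q t| with hK
    have hKc : ContinuousOn K (Set.uIcc (x₀/2) 0) := by
      apply intervalIntegral.continuousOn_primitive_interval
      rw [Set.uIcc_of_le hx₀2, integrableOn_Icc_iff_integrableOn_Ioc]
      exact HqA
    have hKc0 : ContinuousWithinAt K (Set.uIcc (x₀/2) 0) 0 :=
      hKc 0 (by rw [Set.uIcc_of_le hx₀2]; exact ⟨hx₀2, le_rfl⟩)
    -- filter reduction
    have hfil : 𝓝[Set.Iio (0:ℝ)] 0 = 𝓝[Set.Ioo (x₀/2) 0] 0 := by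
      rw [show Set.Ioo (x₀/2) (0:ℝ) = Set.Iio 0 ∩ Set.Ioi (x₀/2) by
            rw [Set.inter_comm, Set.Ioi_inter_Iio]]
      exact (nhdsWithin_inter_of_mem' (mem_nhdsWithin_of_mem_nhds
        (Ioi_mem_nhds (by linarith)))).symm
    rw [hfil]
    apply squeeze_zero_norm' (a := fun z => K 0 - K z)
    · filter_upwards [self_mem_nhdsWithin] with z hz
      obtain ⟨hz1, hz2⟩ := hz
      have hzneg : z < 0 := hz2
      have key : ∀ t, z ≤ t → t ≤ 0 → |q t * Real.sin (ρ * (z - t)) / ρ| ≤ |q t| * (-z) := by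
        intro t ht1 ht2
        rw [abs_div, abs_mul, div_le_iff₀ hρ']
        have h5 : |z - t| ≤ -z := by
          rw [abs_of_nonpos (by linarith)]; linarith
        calc |q t| * |Real.sin (ρ * (z - t))| ≤ |q t| * |ρ * (z - t)| :=
              mul_le_mul_of_nonneg_left Real.abs_sin_le_abs (abs_nonneg _)
          _ = |q t| * (|z - t| * |ρ|) := by rw [abs_mul]; ring
          _ ≤ |q t| * (-z * |ρ|) := by gcongr
          _ = |q t| * -z * |ρ| := by ring
      -- integrability of |q| on [z,0] etc
      have hsub : Set.Ioc z 0 ⊆ Set.Ioc (x₀/2) 0 := Set.Ioc_subset_Ioc hz1.le le_rfl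
      have hqz : IntegrableOn q (Set.Ioc z 0) volume := by
        have := Hq
        rw [intervalIntegrable_iff, Set.uIoc_of_le hx₀2] at this
        exact this.mono_set hsub
      have hqzabs : IntegrableOn (fun t => |q t| * (-z)) (Set.Ioc z 0) volume :=
        (HqA.mono_set hsub).mul_const _
      -- integrability of the integrand g_z
      have hgz : IntervalIntegrable (fun t => q t * Real.sin (ρ * (z - t)) / ρ) volume z 0 := by
        rw [intervalIntegrable_iff, Set.uIoc_of_le hzneg.le]
        have hcont : Continuous fun t => Real.sin (ρ * (z - t)) / ρ := by fun_prop
        have hmeas : AEStronglyMeasurable (fun t => q t * Real.sin (ρ * (z - t)) / ρ)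
            (volume.restrict (Set.Ioc z 0)) := by
          have := hqz.aestronglyMeasurable.mul hcont.aestronglyMeasurable
          simp only [mul_div_assoc]
          exact this
        apply Integrable.mono' hqzabs hmeas
        rw [ae_restrict_iff' measurableSet_Ioc]
        filter_upwards with t ht
        rw [Real.norm_eq_abs]
        exact key t ht.1.le ht.2
      -- the bound
      have hFz : F z = -∫ t in z..0, q t * Real.sin (ρ * (z - t)) / ρ := by
        simp only [hF]
        exact intervalIntegral.integral_symm z 0
      have hbound : |F z| ≤ (-z) * (K 0 - K z) := by
        rw [hFz, abs_neg]
        have h1 : |∫ t in z..0, q t * Real.sin (ρ * (z - t)) / ρ| ≤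
            ∫ t in z..0, |q t * Real.sin (ρ * (z - t)) / ρ| :=
          intervalIntegral.abs_integral_le_integral_abs hzneg.le
        have h2 : (∫ t in z..0, |q t * Real.sin (ρ * (z - t)) / ρ|) ≤
            ∫ t in z..0, |q t| * (-z) := by
          apply intervalIntegral.integral_mono_on hzneg.le hgz.abs
          · rw [intervalIntegrable_iff, Set.uIoc_of_le hzneg.le]; exact hqzabs
          · intro t ht
            exact key t ht.1 ht.2
        have h3 : (∫ t in z..0, |q t| * (-z)) = (-z) * ∫ t in z..0, |q t| := by
          rw [intervalIntegral.integral_mul_const]; ring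
        have h4 : (∫ t in z..0, |q t|) = K 0 - K z := by
          have ha : IntervalIntegrable (fun t => |q t|) volume (x₀/2) z := by
            apply Hq.abs.mono_set
            rw [Set.uIcc_of_le hz1.le, Set.uIcc_of_le hx₀2]
            exact Set.Icc_subset_Icc le_rfl hzneg.le
          have hb : IntervalIntegrable (fun t => |q t|) volume z 0 := by
            apply Hq.abs.mono_set
            rw [Set.uIcc_of_le hzneg.le, Set.uIcc_of_le hx₀2]
            exact Set.Icc_subset_Icc hz1.le le_rfl
          have := intervalIntegral.integral_add_adjacent_intervals ha hb
          rw [hK]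
          linarith [this]
        calc |∫ t in z..0, q t * Real.sin (ρ * (z - t)) / ρ| ≤ ∫ t in z..0, |q t| * (-z) :=
              h1.trans h2
          _ = (-z) * (K 0 - K z) := by rw [h3, h4]
      -- conclude slope bound
      have hKnn : 0 ≤ K 0 - K z := by
        nlinarith [hbound, abs_nonneg (F z)]
      rw [Real.norm_eq_abs]
      have : slope F 0 z = F z / z := by
        rw [slope_def_field, hF0]; ring_nf
      rw [this, abs_div, abs_of_neg hzneg]
      rw [div_le_iff₀ (by linarith : (0:ℝ) < -z)]
      nlinarith [hbound]
    · have : Tendsto (fun z => K 0 - K z) (𝓝[Set.uIcc (x₀/2) 0] 0) (𝓝 (K 0 - K 0)) :=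
        tendsto_const_nhds.sub hKc0
      rw [sub_self] at this
      apply this.mono_left
      apply nhdsWithin_mono
      rw [Set.uIcc_of_le hx₀2]
      exact fun z hz => ⟨hz.1.le, hz.2.le⟩
  · push_neg at hP
    apply Filter.Tendsto.congr'
      (f₁ := fun _ : ℝ => (0:ℝ)) _ tendsto_const_nhds
    filter_upwards [self_mem_nhdsWithin,
      mem_nhdsWithin_of_mem_nhds (Ioi_mem_nhds (by linarith : -(π/(2*|ρ|)) < (0:ℝ)))]
      with z hz1 hz2
    have hz : z ∈ Set.Ioo (-(π/(2*|ρ|))) 0 := ⟨hz2, hz1⟩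
    have := hP z hz
    have hFz : F z = 0 := by
      simp only [hF]
      rw [intervalIntegral.integral_symm z 0, intervalIntegral.integral_undef this]
      simp
    rw [slope_def_field, hF0, hFz]
    simp

theorem stmt_12 (ρ : ℝ) (hρ : ρ ≠ 0) (a₁ a₂ : ℝ)
    (h₁ : a₁ ∈ Set.Ioo 0 π) (h₂ : a₂ ∈ Set.Ioo 0 π)
    (q : ℝ → ℝ) (hq : ContinuousOn q (Set.Icc 0 π)) (c : ℝ)
    (y : ℝ → ℝ)
    (hy : y = fun x => Real.sin (ρ * x) / ρ + c * ∫ t in (0:ℝ)..x, q t * Real.sin (ρ * (x - t)) / ρ)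
    (hc : c * (1 - (∫ t in (0:ℝ)..a₁, q t * Real.sin (ρ * (a₁ - t)) / ρ)
               - ∫ t in (0:ℝ)..a₂, q t * Real.sin (ρ * (a₂ - t)) / ρ)
          = Real.sin (ρ * a₁) / ρ + Real.sin (ρ * a₂) / ρ) :
    y 0 = 0 ∧ deriv y 0 = 1 ∧
    ∀ x ∈ Set.Ioo 0 π, -(deriv (deriv y) x) + q x * (y a₁ + y a₂) = ρ ^ 2 * y x := by
  have hπ : (0:ℝ) < π := Real.pi_pos
  set q' : ℝ → ℝ := fun t => q (max 0 (min t π)) with hq'def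
  have hq'c : Continuous q' := by
    apply hq.comp_continuous (by fun_prop)
    intro t
    exact ⟨le_max_left _ _, max_le hπ.le (min_le_right _ _)⟩
  have hq'eq : ∀ t ∈ Set.Icc (0:ℝ) π, q' t = q t := by
    intro t ht
    simp only [hq'def]
    rw [min_eq_left ht.2, max_eq_right ht.1]
  set A : ℝ → ℝ := fun x => ∫ t in (0:ℝ)..x, q' t * Real.cos (ρ * t) with hA
  set B : ℝ → ℝ := fun x => ∫ t in (0:ℝ)..x, q' t * Real.sin (ρ * t) with hB
  have hAc : Continuous fun t => q' t * Real.cos (ρ * t) := by fun_prop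
  have hBc : Continuous fun t => q' t * Real.sin (ρ * t) := by fun_prop
  have hAd : ∀ x, HasDerivAt A (q' x * Real.cos (ρ * x)) x := fun x =>
    (hAc.integral_hasStrictDerivAt 0 x).hasDerivAt
  have hBd : ∀ x, HasDerivAt B (q' x * Real.sin (ρ * x)) x := fun x =>
    (hBc.integral_hasStrictDerivAt 0 x).hasDerivAt
  set G : ℝ → ℝ := fun x =>
    Real.sin (ρ * x) / ρ + c * (Real.sin (ρ * x) / ρ * A x - Real.cos (ρ * x) / ρ * B x) with hG
  -- y = G on [0, π]
  have hyG : ∀ x ∈ Set.Icc (0:ℝ) π, y x = G x := by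
    intro x hx
    rw [hy]
    simp only [hG]
    have hint : (∫ t in (0:ℝ)..x, q t * Real.sin (ρ * (x - t)) / ρ) =
        ∫ t in (0:ℝ)..x, (Real.sin (ρ * x) / ρ * (q' t * Real.cos (ρ * t))
          - Real.cos (ρ * x) / ρ * (q' t * Real.sin (ρ * t))) := by
      apply intervalIntegral.integral_congr
      intro t ht
      rw [Set.uIcc_of_le hx.1] at ht
      show q t * Real.sin (ρ * (x - t)) / ρ = _
      rw [← hq'eq t ⟨ht.1, ht.2.trans hx.2⟩, mul_sub, Real.sin_sub]
      ring
    rw [hint, intervalIntegral.integral_sub ((hAc.intervalIntegrable 0 x).const_mul _)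
        ((hBc.intervalIntegrable 0 x).const_mul _),
      intervalIntegral.integral_const_mul, intervalIntegral.integral_const_mul]
  -- derivative helpers
  have hsin' : ∀ x : ℝ, HasDerivAt (fun x => Real.sin (ρ * x) / ρ) (Real.cos (ρ * x)) x := by
    intro x
    have h := ((Real.hasDerivAt_sin (ρ * x)).comp x ((hasDerivAt_id x).const_mul ρ)).div_const ρ
    refine h.congr_deriv (Eq.symm ?_)
    field_simp
  have hcos' : ∀ x : ℝ, HasDerivAt (fun x => Real.cos (ρ * x) / ρ) (-Real.sin (ρ * x)) x := by
    intro x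
    have h := ((Real.hasDerivAt_cos (ρ * x)).comp x ((hasDerivAt_id x).const_mul ρ)).div_const ρ
    refine h.congr_deriv (Eq.symm ?_)
    field_simp
  have hsin2 : ∀ x : ℝ, HasDerivAt (fun x => Real.sin (ρ * x)) (ρ * Real.cos (ρ * x)) x := by
    intro x
    have h := (Real.hasDerivAt_sin (ρ * x)).comp x ((hasDerivAt_id x).const_mul ρ)
    refine h.congr_deriv (Eq.symm ?_)
    simp [mul_comm]
  have hcos2 : ∀ x : ℝ, HasDerivAt (fun x => Real.cos (ρ * x)) (-(ρ * Real.sin (ρ * x))) x := by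
    intro x
    have h := (Real.hasDerivAt_cos (ρ * x)).comp x ((hasDerivAt_id x).const_mul ρ)
    refine h.congr_deriv (Eq.symm ?_)
    simp; ring
  set G₁ : ℝ → ℝ := fun x =>
    Real.cos (ρ * x) * (1 + c * A x) + c * Real.sin (ρ * x) * B x with hG₁
  have hGd : ∀ x, HasDerivAt G (G₁ x) x := by
    intro x
    have h1 : HasDerivAt (fun x => Real.sin (ρ * x) / ρ * A x)
        (Real.cos (ρ * x) * A x + Real.sin (ρ * x) / ρ * (q' x * Real.cos (ρ * x))) x :=
      (hsin' x).mul (hAd x)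
    have h2 : HasDerivAt (fun x => Real.cos (ρ * x) / ρ * B x)
        (-Real.sin (ρ * x) * B x + Real.cos (ρ * x) / ρ * (q' x * Real.sin (ρ * x))) x :=
      (hcos' x).mul (hBd x)
    have h := (hsin' x).add (((h1.sub h2)).const_mul c)
    refine h.congr_deriv (Eq.symm ?_)
    simp only [hG₁]
    ring
  set G₂ : ℝ → ℝ := fun x => -(ρ ^ 2) * G x + c * q' x with hG₂
  have hG₁d : ∀ x, HasDerivAt G₁ (G₂ x) x := by
    intro x
    have h1 : HasDerivAt (fun x => Real.cos (ρ * x) * (1 + c * A x))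
        (-(ρ * Real.sin (ρ * x)) * (1 + c * A x)
          + Real.cos (ρ * x) * (c * (q' x * Real.cos (ρ * x)))) x :=
      (hcos2 x).mul (((hAd x).const_mul c).const_add 1)
    have h2 : HasDerivAt (fun x => c * Real.sin (ρ * x) * B x)
        ((c * (ρ * Real.cos (ρ * x))) * B x
          + c * Real.sin (ρ * x) * (q' x * Real.sin (ρ * x))) x :=
      (((hsin2 x).const_mul c).mul (hBd x))
    have h := h1.add h2
    refine h.congr_deriv (Eq.symm ?_)
    simp only [hG₂, hG]
    have hid : Real.sin (ρ * x) ^ 2 + Real.cos (ρ * x) ^ 2 = 1 := Real.sin_sq_add_cos_sq _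
    field_simp
    linear_combination (-(c * q' x)) * hid
  -- y a₁ + y a₂ = c
  have hsum : y a₁ + y a₂ = c := by
    rw [hy]
    simp only []
    linear_combination -hc
  refine ⟨?_, ?_, ?_⟩
  · rw [hy]; simp
  · -- derivative at 0
    have hright : HasDerivWithinAt y 1 (Set.Ici 0) 0 := by
      have h0 : G₁ 0 = 1 := by simp [hG₁, hA, hB]
      have hGd0 : HasDerivWithinAt G 1 (Set.Ici 0) 0 := by
        have := (hGd 0).hasDerivWithinAt (s := Set.Ici 0)
        rwa [h0] at this
      apply hGd0.congr_of_eventuallyEq _ (hyG 0 ⟨le_rfl, hπ.le⟩)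
      have hmem : Set.Iic π ∈ 𝓝[Set.Ici (0:ℝ)] 0 :=
        mem_nhdsWithin_of_mem_nhds (Iic_mem_nhds hπ)
      filter_upwards [self_mem_nhdsWithin, hmem] with z hz1 hz2
      exact hyG z ⟨hz1, hz2⟩
    have hleft : HasDerivWithinAt y 1 (Set.Iic 0) 0 := by
      rw [hy]
      have h1 : HasDerivWithinAt (fun x => Real.sin (ρ * x) / ρ) 1 (Set.Iic 0) 0 := by
        have := (hsin' 0).hasDerivWithinAt (s := Set.Iic 0)
        simpa using this
      have h2 := (left_deriv_aux ρ hρ q).const_mul c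
      exact (h1.add h2).congr_deriv (by simp)
    have : HasDerivAt y 1 0 := by
      have h := hleft.union hright
      rwa [Set.Iic_union_Ici, hasDerivWithinAt_univ] at h
    exact this.deriv
  · intro x hx
    have hxIcc : x ∈ Set.Icc (0:ℝ) π := ⟨hx.1.le, hx.2.le⟩
    have hmemnhds : Set.Ioo (0:ℝ) π ∈ 𝓝 x := isOpen_Ioo.mem_nhds hx
    have hyG' : deriv y =ᶠ[𝓝 x] G₁ := by
      filter_upwards [hmemnhds] with z hz
      have hev : y =ᶠ[𝓝 z] G := by
        filter_upwards [isOpen_Ioo.mem_nhds hz] with w hw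
        exact hyG w ⟨hw.1.le, hw.2.le⟩
      rw [hev.deriv_eq]
      exact (hGd z).deriv
    have hdd : deriv (deriv y) x = G₂ x := by
      rw [hyG'.deriv_eq]
      exact (hG₁d x).deriv
    rw [hdd, hsum]
    simp only [hG₂]
    rw [hq'eq x hxIcc, hyG x hxIcc]
    ring
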